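/- For any real a > 0 and positive integer n, ∑_{k=1}^{n} ψ₀(k+a)ψ₁(k+a) = (a+n)ψ₀(a+n+1)ψ₁(a+n+1) − aψ₀(a+1)ψ₁(a+1) − (1/2)(2a+2n+1)ψ₁(a+n+1) + (1/2)(2a+1)ψ₁(a+1) + (1/2)ψ₀(a+n+1)² − ψ₀(a+n+1) − (1/2)ψ₀(a+1)² + ψ₀(a+1). -/

import Mathlib

/-!
Differentiating `log Γ(x + 1) = log Γ(x) + log x` a total of `m + 1` times gives
`ψₘ(x + 1) = ψₘ(x) + (-1)ᵐ m! / x^(m+1)` for `x > 0`. With the cases `m = 0, 1` of this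
recurrence, the inductive step `n → n + 1` of the identity becomes a rational-function
identity in `a + n + 1`, `ψ₀(a + n + 1)` and `ψ₁(a + n + 1)`.
-/

open Finset

/-- The `m`-th polygamma function: the `(m+1)`-th derivative of `log ∘ Γ`. -/
noncomputable def psi (m : ℕ) (x : ℝ) : ℝ :=
  iteratedDeriv (m + 1) (fun y => Real.log (Real.Gamma y)) x

namespace Real

theorem iteratedDeriv_succ_log (m : ℕ) (x : ℝ) :
    iteratedDeriv (m + 1) log x = (-1) ^ m * m.factorial * x ^ (-1 - m : ℤ) := by
  rw [iteratedDeriv_succ', deriv_log', iteratedDeriv_eq_iterate, iter_deriv_inv]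

theorem contDiffAt_Gamma_of_pos {n : WithTop ℕ∞} {x : ℝ} (hx : 0 < x) :
    ContDiffAt ℝ n Gamma x := by
  have hU : IsOpen {z : ℂ | 0 < z.re} := isOpen_lt continuous_const Complex.continuous_re
  have hdiff : DifferentiableOn ℂ Complex.Gamma {z : ℂ | 0 < z.re} := fun z hz =>
    (Complex.differentiableAt_Gamma z fun m hm => by
      simp only [hm, Set.mem_ofPred_eq, Complex.neg_re, Complex.natCast_re] at hz
      linarith [m.cast_nonneg (α := ℝ)]).differentiableWithinAt
  have hC : ContDiffAt ℂ n Complex.Gamma x :=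
    (hdiff.contDiffOn hU).contDiffAt (hU.mem_nhds (by simpa using hx))
  simpa [Complex.Gamma_ofReal] using hC.real_of_complex

theorem contDiffAt_log_Gamma {n : WithTop ℕ∞} {x : ℝ} (hx : 0 < x) :
    ContDiffAt ℝ n (fun y => log (Gamma y)) x :=
  (contDiffAt_Gamma_of_pos hx).log (Gamma_pos_of_pos hx).ne'

end Real

open Real in
theorem psi_add_one (m : ℕ) {x : ℝ} (hx : 0 < x) :
    psi m (x + 1) = psi m x + (-1) ^ m * m.factorial * x ^ (-1 - m : ℤ) := by
  have hshift : (fun y => log (Gamma (y + 1))) =ᶠ[nhds x] (fun y => log (Gamma y)) + log := by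
    filter_upwards [Ioi_mem_nhds hx] with y hy
    rw [Pi.add_apply, Gamma_add_one hy.ne', log_mul hy.ne' (Gamma_pos_of_pos hy).ne', add_comm]
  unfold psi
  rw [← congrFun (iteratedDeriv_comp_add_const _ (fun y => log (Gamma y)) 1) x,
    hshift.iteratedDeriv_eq, iteratedDeriv_add (contDiffAt_log_Gamma hx)
      (contDiffAt_log.2 hx.ne'), Real.iteratedDeriv_succ_log]

theorem psi_zero_add_one {x : ℝ} (hx : 0 < x) : psi 0 (x + 1) = psi 0 x + 1 / x := by
  simpa using psi_add_one 0 hx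

theorem psi_one_add_one {x : ℝ} (hx : 0 < x) : psi 1 (x + 1) = psi 1 x - 1 / x ^ 2 := by
  simpa [sub_eq_add_neg] using psi_add_one 1 hx

theorem stmt_5_general (a : ℝ) (ha : 0 < a) (n : ℕ) :
    ∑ k ∈ Icc 1 n, psi 0 ((k : ℝ) + a) * psi 1 ((k : ℝ) + a) =
      (a + n) * psi 0 (a + n + 1) * psi 1 (a + n + 1) - a * psi 0 (a + 1) * psi 1 (a + 1) -
        (1/2) * (2*a + 2*n + 1) * psi 1 (a + n + 1) + (1/2) * (2*a + 1) * psi 1 (a + 1) +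
        (1/2) * (psi 0 (a + n + 1))^2 - psi 0 (a + n + 1) - (1/2) * (psi 0 (a + 1))^2 + psi 0 (a + 1) := by
  induction n with
  | zero => simp
  | succ n ih =>
    have hx : 0 < a + n + 1 := by positivity
    rw [sum_Icc_succ_top (by omega), ih]
    push_cast
    rw [show (n + 1 + a : ℝ) = a + n + 1 by ring, show a + (n + 1) + 1 = a + n + 1 + 1 by ring,
      psi_zero_add_one hx, psi_one_add_one hx]
    field_simp
    ring

theorem stmt_5 (a : ℝ) (ha : 0 < a) (n : ℕ) (hn : 0 < n) :
    ∑ k ∈ Icc 1 n, psi 0 ((k : ℝ) + a) * psi 1 ((k : ℝ) + a) =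
      (a + n) * psi 0 (a + n + 1) * psi 1 (a + n + 1) - a * psi 0 (a + 1) * psi 1 (a + 1) -
        (1/2) * (2*a + 2*n + 1) * psi 1 (a + n + 1) + (1/2) * (2*a + 1) * psi 1 (a + 1) +
        (1/2) * (psi 0 (a + n + 1))^2 - psi 0 (a + n + 1) - (1/2) * (psi 0 (a + 1))^2 + psi 0 (a + 1) :=
  stmt_5_general a ha n
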